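/- arXiv:2107.12138 — 2 statements merged into one kernel-verified Lean document; each statement's English description precedes it below -/
import Mathlib

section
/- Let α₂, …, α_k be positive integers and β₂, …, β_k integers with gcd(α_i, β_i) = 1 for each i. Set α := lcm(α₂, …, α_k). Then gcd(α, β₂·α/α₂, …, β_k·α/α_k) = 1. -/
/-!
Let `A = lcm αᵢ` and let `d` be a common divisor of `A` and of all `βᵢ · (A / αᵢ)`. Since `d`
divides both `αᵢ · (A / αᵢ) = A` and `βᵢ · (A / αᵢ)`, and `αᵢ, βᵢ` are coprime, `d ∣ A / αᵢ`.
But then `d · αᵢ ∣ A` for every `i`, so `A ∣ A / d`, which forces `d = 1`.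
-/

theorem IsCoprime.dvd_of_dvd_mul_of_dvd_mul {R : Type*} [CommRing R] {a b d m : R}
    (h : IsCoprime a b) (ha : d ∣ a * m) (hb : d ∣ b * m) : d ∣ m := by
  obtain ⟨u, v, huv⟩ := h
  have hm : m = u * (a * m) + v * (b * m) := by linear_combination (-m) * huv
  rw [hm]
  exact dvd_add (dvd_mul_of_dvd_right ha u) (dvd_mul_of_dvd_right hb v)

theorem Finset.eq_one_of_dvd_lcm_div {ι : Type*} {s : Finset ι} {α : ι → ℕ} (hA : s.lcm α ≠ 0)
    {d : ℕ} (hd : d ∣ s.lcm α) (hdiv : ∀ i ∈ s, d ∣ s.lcm α / α i) : d = 1 := by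
  have hdvd : s.lcm α ∣ s.lcm α / d := Finset.lcm_dvd fun i hi => by
    apply Nat.dvd_div_of_mul_dvd
    rw [mul_comm]
    exact Nat.mul_dvd_of_dvd_div (Finset.dvd_lcm hi) (hdiv i hi)
  have hq : 0 < s.lcm α / d := Nat.div_pos (Nat.le_of_dvd (Nat.pos_of_ne_zero hA) hd)
    (Nat.pos_of_dvd_of_pos hd (Nat.pos_of_ne_zero hA))
  rw [← Nat.dvd_one]
  refine Nat.dvd_of_mul_dvd_mul_right hq ?_
  rwa [Nat.mul_div_cancel' hd, one_mul]

/-- If `gcd (α i) (β i) = 1` for all `i` in a finite index set, and `A = lcm of the α i`,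
then `gcd (A, β i * (A / α i) for all i) = 1`. -/
theorem stmt_1 {ι : Type*} (s : Finset ι) (α : ι → ℕ) (β : ι → ℤ)
    (hα : ∀ i ∈ s, 0 < α i)
    (hcop : ∀ i ∈ s, Nat.gcd (α i) (β i).natAbs = 1) :
    gcd ((s.lcm α : ℕ) : ℤ) (s.gcd fun i => β i * ((s.lcm α / α i : ℕ) : ℤ)) = 1 := by
  set A := s.lcm α
  set d := Int.gcd (A : ℤ) (s.gcd fun i => β i * ((A / α i : ℕ) : ℤ))
  have hA : A ≠ 0 := Finset.lcm_ne_zero_iff.mpr fun i hi => (hα i hi).ne'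
  have hdA : d ∣ A := Int.natCast_dvd_natCast.mp (Int.gcd_dvd_left _ _)
  have hdiv : ∀ i ∈ s, d ∣ A / α i := fun i hi => by
    have hαβ : IsCoprime (α i : ℤ) (β i) := Int.isCoprime_iff_gcd_eq_one.mpr (hcop i hi)
    refine Int.natCast_dvd_natCast.mp (hαβ.dvd_of_dvd_mul_of_dvd_mul ?_ ?_)
    · exact_mod_cast hdA.trans (Nat.mul_div_cancel' (Finset.dvd_lcm hi)).symm.dvd
    · exact (Int.gcd_dvd_right _ _).trans (Finset.gcd_dvd hi)
  rw [← Int.coe_gcd]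
  exact_mod_cast Finset.eq_one_of_dvd_lcm_div hA hdA hdiv
end

section
/- Let ρ > 0, and on the half-open annulus A = [0, ρ) × (ℝ/ℤ) with coordinates (r, s) consider the 2-form ω = −r dr ∧ ds and, for t ∈ [0, 1], a Hamiltonian H_t of the form H_t(r, s) = b + r²·h(t, r, s) with b ∈ ℝ constant and h continuous with |h| ≤ ε. Let K(r, s) := ∫₀¹ H_t(r, s) dt − b. Then |K(r, s)| ≤ εr² for all (r, s) ∈ A, and for any m with 0 < m ≤ ερ², if additionally K ≥ −m on A, then ∫_A K ω ≥ −m·area(A, ω) + m²/(4ε), where area(A, ω) = ρ²/2. -/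
/-- Local boundary estimate in the fixed point theorem: with
`H_t(r,s) = b + r² h(t,r,s)`, `|h| ≤ ε`, and `K(r,s) = ∫₀¹ H_t(r,s) dt − b`, one has
`|K| ≤ εr²`; moreover, if `K ≥ −m` with `0 < m ≤ ερ²`, then
`∫_A K ω = ∫₀^ρ (∫₀¹ K(r,s) ds) r dr ≥ −m·(ρ²/2) + m²/(4ε)`. -/
theorem stmt_19 (ρ ε b m : ℝ) (hρ : 0 < ρ)
    (h : ℝ → ℝ → ℝ → ℝ)
    (hcont : Continuous fun p : ℝ × ℝ × ℝ => h p.1 p.2.1 p.2.2)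
    (hbound : ∀ t r s, |h t r s| ≤ ε)
    (hm : 0 < m) (hmε : m ≤ ε * ρ ^ 2) :
    (∀ r ∈ Set.Ico (0 : ℝ) ρ, ∀ s : ℝ,
        |(∫ t in (0 : ℝ)..1, (b + r ^ 2 * h t r s)) - b| ≤ ε * r ^ 2) ∧
    ((∀ r ∈ Set.Ico (0 : ℝ) ρ, ∀ s : ℝ,
        -m ≤ (∫ t in (0 : ℝ)..1, (b + r ^ 2 * h t r s)) - b) →
      (∫ r in (0 : ℝ)..ρ,
          (∫ s in (0 : ℝ)..1, ((∫ t in (0 : ℝ)..1, (b + r ^ 2 * h t r s)) - b)) * r) ≥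
        -m * (ρ ^ 2 / 2) + m ^ 2 / (4 * ε)) := by
  have hε : 0 < ε := by nlinarith
  -- continuity of t ↦ h t r s
  have hcont1 : ∀ r s : ℝ, Continuous fun t => h t r s := fun r s =>
    hcont.comp (continuous_id.prodMk (continuous_const.prodMk continuous_const))
  have hint1 : ∀ r s : ℝ, IntervalIntegrable (fun t => h t r s) MeasureTheory.volume 0 1 :=
    fun r s => (hcont1 r s).intervalIntegrable 0 1
  -- the key identity
  have hK : ∀ r s : ℝ, (∫ t in (0:ℝ)..1, (b + r ^ 2 * h t r s)) - b
      = r ^ 2 * ∫ t in (0:ℝ)..1, h t r s := by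
    intro r s
    rw [intervalIntegral.integral_add intervalIntegrable_const
      (((hint1 r s).const_mul _)), intervalIntegral.integral_const,
      intervalIntegral.integral_const_mul]
    simp
  -- bound |∫ h| ≤ ε
  have hIb : ∀ r s : ℝ, |∫ t in (0:ℝ)..1, h t r s| ≤ ε := by
    intro r s
    have := intervalIntegral.norm_integral_le_of_norm_le_const
      (C := ε) (f := fun t => h t r s) (a := 0) (b := 1)
      (fun t _ => hbound t r s)
    simpa using this
  have habs : ∀ r s : ℝ, |(∫ t in (0:ℝ)..1, (b + r ^ 2 * h t r s)) - b| ≤ ε * r ^ 2 := by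
    intro r s
    rw [hK, abs_mul, abs_pow, sq_abs]
    calc r ^ 2 * |∫ t in (0:ℝ)..1, h t r s| ≤ r ^ 2 * ε := by
          exact mul_le_mul_of_nonneg_left (hIb r s) (sq_nonneg r)
      _ = ε * r ^ 2 := mul_comm _ _
  refine ⟨fun r _ s => habs r s, ?_⟩
  intro hlow
  set K : ℝ → ℝ → ℝ := fun r s => (∫ t in (0:ℝ)..1, (b + r ^ 2 * h t r s)) - b with hKdef
  -- continuity of K
  have hKcont : Continuous fun p : ℝ × ℝ => K p.1 p.2 := by
    have hG : Continuous fun p : ℝ × ℝ => ∫ t in (0:ℝ)..1, h t p.1 p.2 := by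
      apply intervalIntegral.continuous_parametric_intervalIntegral_of_continuous'
        (f := fun (p : ℝ × ℝ) (t : ℝ) => h t p.1 p.2)
      exact hcont.comp
        (continuous_snd.prodMk (continuous_fst.fst.prodMk continuous_fst.snd))
    have : (fun p : ℝ × ℝ => K p.1 p.2)
        = fun p : ℝ × ℝ => p.1 ^ 2 * ∫ t in (0:ℝ)..1, h t p.1 p.2 := by
      funext p; exact hK p.1 p.2
    rw [this]
    exact ((continuous_fst.pow 2)).mul hG
  -- inner integral
  set I : ℝ → ℝ := fun r => ∫ s in (0:ℝ)..1, K r s with hIdef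
  have hIcont : Continuous I :=
    intervalIntegral.continuous_parametric_intervalIntegral_of_continuous' (f := K) hKcont 0 1
  set φ : ℝ → ℝ := fun r => max (-m) (-(ε * r ^ 2)) with hφdef
  have hφcont : Continuous φ := continuous_const.max (by fun_prop)
  -- pointwise K ≥ φ on Ico
  have hKge : ∀ r ∈ Set.Ico (0:ℝ) ρ, ∀ s, φ r ≤ K r s := by
    intro r hr s
    refine max_le (hlow r hr s) ?_
    exact (abs_le.mp (habs r s)).1
  -- I ≥ φ on Ico
  have hIge : ∀ r ∈ Set.Ico (0:ℝ) ρ, φ r ≤ I r := by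
    intro r hr
    have h1 : φ r = ∫ s in (0:ℝ)..1, φ r := by simp
    rw [h1]
    apply intervalIntegral.integral_mono_on zero_le_one
      intervalIntegrable_const
      ((hKcont.comp (Continuous.prodMk_right r)).intervalIntegrable 0 1)
    intro s _
    exact hKge r hr s
  -- extend to Icc by continuity
  have hIge' : ∀ r ∈ Set.Icc (0:ℝ) ρ, φ r ≤ I r := by
    have hcl : closure (Set.Ico (0:ℝ) ρ) = Set.Icc 0 ρ := closure_Ico hρ.ne
    intro r hr
    rw [← hcl] at hr
    revert r
    exact fun r hr => le_on_closure (f := φ) (g := I) hIge hφcont.continuousOn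
      hIcont.continuousOn hr
  -- compare integrals
  have hmono : (∫ r in (0:ℝ)..ρ, φ r * r) ≤ ∫ r in (0:ℝ)..ρ, I r * r := by
    apply intervalIntegral.integral_mono_on hρ.le
      ((hφcont.mul continuous_id).intervalIntegrable 0 ρ)
      ((hIcont.mul continuous_id).intervalIntegrable 0 ρ)
    intro r hr
    exact mul_le_mul_of_nonneg_right (hIge' r hr) hr.1
  -- compute the lower integral
  set r₀ : ℝ := Real.sqrt (m / ε) with hr₀def
  have hr₀sq : r₀ ^ 2 = m / ε := Real.sq_sqrt (by positivity)
  have hr₀nonneg : 0 ≤ r₀ := Real.sqrt_nonneg _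
  have hr₀le : r₀ ≤ ρ := by
    rw [hr₀def, show ρ = Real.sqrt (ρ ^ 2) from (Real.sqrt_sq hρ.le).symm]
    apply Real.sqrt_le_sqrt
    rw [div_le_iff₀ hε]
    nlinarith
  have hsplit : (∫ r in (0:ℝ)..r₀, φ r * r) + (∫ r in r₀..ρ, φ r * r)
      = ∫ r in (0:ℝ)..ρ, φ r * r :=
    intervalIntegral.integral_add_adjacent_intervals
      ((hφcont.mul continuous_id).intervalIntegrable 0 r₀)
      ((hφcont.mul continuous_id).intervalIntegrable r₀ ρ)
  have hleft : (∫ r in (0:ℝ)..r₀, φ r * r) = -(ε * r₀ ^ 4) / 4 := by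
    have : (∫ r in (0:ℝ)..r₀, φ r * r) = ∫ r in (0:ℝ)..r₀, -ε * r ^ 3 := by
      apply intervalIntegral.integral_congr
      intro r hr
      rw [Set.uIcc_of_le hr₀nonneg] at hr
      show φ r * r = -ε * r ^ 3
      have h1 : φ r = -(ε * r ^ 2) := by
        apply max_eq_right
        have : r ^ 2 ≤ r₀ ^ 2 := by nlinarith [hr.1, hr.2]
        rw [hr₀sq] at this
        have := (le_div_iff₀ hε).mp this
        linarith
      rw [h1]; ring
    rw [this, intervalIntegral.integral_const_mul, integral_pow]
    ring
  have hright : (∫ r in r₀..ρ, φ r * r) = -m * (ρ ^ 2 - r₀ ^ 2) / 2 := by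
    have : (∫ r in r₀..ρ, φ r * r) = ∫ r in r₀..ρ, -m * r := by
      apply intervalIntegral.integral_congr
      intro r hr
      rw [Set.uIcc_of_le hr₀le] at hr
      show φ r * r = -m * r
      have h1 : φ r = -m := by
        apply max_eq_left
        have h2 : r₀ ^ 2 ≤ r ^ 2 := by nlinarith [hr.1, hr.2]
        rw [hr₀sq] at h2
        have := (div_le_iff₀ hε).mp h2
        nlinarith
      rw [h1]
    rw [this, intervalIntegral.integral_const_mul]
    have : (∫ r in r₀..ρ, r) = (ρ ^ 2 - r₀ ^ 2) / 2 := by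
      simpa using integral_id (a := r₀) (b := ρ)
    rw [this]; ring
  have hval : (∫ r in (0:ℝ)..ρ, φ r * r) = -m * (ρ ^ 2 / 2) + m ^ 2 / (4 * ε) := by
    rw [← hsplit, hleft, hright]
    rw [show r₀ ^ 4 = (m / ε) ^ 2 by rw [← hr₀sq]; ring, hr₀sq]
    field_simp
    ring
  calc -m * (ρ ^ 2 / 2) + m ^ 2 / (4 * ε) = ∫ r in (0:ℝ)..ρ, φ r * r := hval.symm
    _ ≤ ∫ r in (0:ℝ)..ρ, I r * r := hmono
end
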